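/- For every L*-formula φ and every context C: C ⊩⁺ −φ if and only if C ⊮⁺ φ, where − is the contextual weak negation. -/
import Mathlib


namespace LAD

/-- L-formulas: built from atoms by extensional connectives ⊃, ∩, ∪, ∼. -/
inductive LForm (A : Type) where
  | atom : A → LForm A
  | eimp : LForm A → LForm A → LForm A
  | econj : LForm A → LForm A → LForm A
  | edisj : LForm A → LForm A → LForm A
  | eneg : LForm A → LForm A

/-- L*-formulas: L-formulas closed under intensional connectives →, ∧, ∨, ¬. -/
inductive SForm (A : Type) where
  | base : LForm A → SForm A
  | iimp : SForm A → SForm A → SForm A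
  | iconj : SForm A → SForm A → SForm A
  | idisj : SForm A → SForm A → SForm A
  | ineg : SForm A → SForm A

variable {A : Type}

/-- A possible world: an assignment of truth values to atoms. -/
abbrev World (A : Type) := A → Bool

/-- A context is a (nonempty) set of possible worlds. -/
abbrev Context (A : Type) := Set (World A)

/-- Classical truth of an L-formula at a world. -/
def LForm.truth (w : World A) : LForm A → Bool
  | .atom a => w a
  | .eimp α β => !α.truth w || β.truth w
  | .econj α β => α.truth w && β.truth w
  | .edisj α β => α.truth w || β.truth w
  | .eneg α => !α.truth w

/-- Assertibility and deniability conditions, as a pair (⊩⁺, ⊩⁻). -/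
def SForm.sem : SForm A → Context A → Prop × Prop
  | .base α, C => (∀ w ∈ C, α.truth w = true, ∀ w ∈ C, α.truth w = false)
  | .ineg φ, C => ((φ.sem C).2, (φ.sem C).1)
  | .idisj φ ψ, C => ((φ.sem C).1 ∨ (ψ.sem C).1, (φ.sem C).2 ∧ (ψ.sem C).2)
  | .iconj φ ψ, C => ((φ.sem C).1 ∧ (ψ.sem C).1, (φ.sem C).2 ∨ (ψ.sem C).2)
  | .iimp φ ψ, C =>
      (∀ D : Context A, D.Nonempty → D ⊆ C → (φ.sem D).1 → (ψ.sem D).1,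
       ∃ D : Context A, D.Nonempty ∧ D ⊆ C ∧ (φ.sem D).1 ∧ (ψ.sem D).2)

/-- C ⊩⁺ φ : assertibility. -/
def Assert (C : Context A) (φ : SForm A) : Prop := (φ.sem C).1

/-- C ⊩⁻ φ : deniability. -/
def Deny (C : Context A) (φ : SForm A) : Prop := (φ.sem C).2

/-- Δ ⊨ ψ : assertibility-preserving consequence. -/
def Entails (Δ : Set (SForm A)) (ψ : SForm A) : Prop :=
  ∀ C : Context A, C.Nonempty → (∀ δ ∈ Δ, Assert C δ) → Assert C ψ


/-- ⊥ := p ∩ ∼p for a fixed atom p. -/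
def botF (p : A) : SForm A := .base (.econj (.atom p) (.eneg (.atom p)))

/-- ◇φ := ¬(φ → ⊥). -/
def dia (p : A) (φ : SForm A) : SForm A := .ineg (.iimp φ (botF p))

mutual
/-- Contextual weak negation −φ. -/
def wneg (p : A) : SForm A → SForm A
  | .base α => dia p (.ineg (.base α))
  | .ineg φ => wnegNeg p φ
  | .iimp φ ψ => dia p (.iconj φ (wneg p ψ))
  | .iconj φ ψ => .idisj (wneg p φ) (wneg p ψ)
  | .idisj φ ψ => .iconj (wneg p φ) (wneg p ψ)

/-- −¬φ, the weak negation of the intensional negation of φ. -/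
def wnegNeg (p : A) : SForm A → SForm A
  | .base α => dia p (.base α)
  | .ineg φ => wneg p φ
  | .iimp φ ψ => .iimp φ (wnegNeg p ψ)
  | .iconj φ ψ => .iconj (wnegNeg p φ) (wnegNeg p ψ)
  | .idisj φ ψ => .idisj (wnegNeg p φ) (wnegNeg p ψ)
end

lemma bot_deny (p : A) (D : Context A) : Deny D (botF p) := by
  intro w _
  simp [LForm.truth]

lemma dia_iff (p : A) (χ : SForm A) (C : Context A) :
    Assert C (dia p χ) ↔ ∃ D : Context A, D.Nonempty ∧ D ⊆ C ∧ Assert D χ := by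
  show ((SForm.iimp χ (botF p)).sem C).2 ↔ _
  simp only [SForm.sem]
  constructor
  · rintro ⟨D, hne, hsub, hχ, _⟩; exact ⟨D, hne, hsub, hχ⟩
  · rintro ⟨D, hne, hsub, hχ⟩; exact ⟨D, hne, hsub, hχ, bot_deny p D⟩

lemma base_exists_iff (P : World A → Prop) (C : Context A) :
    (∃ D : Context A, D.Nonempty ∧ D ⊆ C ∧ ∀ w ∈ D, P w) ↔ ∃ w ∈ C, P w := by
  constructor
  · rintro ⟨D, ⟨w, hw⟩, hsub, h⟩; exact ⟨w, hsub hw, h w hw⟩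
  · rintro ⟨w, hwC, hPw⟩
    exact ⟨{w}, Set.singleton_nonempty w, Set.singleton_subset_iff.mpr hwC,
      fun w' hw' => by rw [Set.mem_singleton_iff.mp hw']; exact hPw⟩

theorem wneg_both (p : A) (φ : SForm A) :
    (∀ C : Context A, C.Nonempty → (Assert C (wneg p φ) ↔ ¬ Assert C φ)) ∧
    (∀ C : Context A, C.Nonempty → (Assert C (wnegNeg p φ) ↔ ¬ Deny C φ)) := by
  induction φ with
  | base α =>
      constructor
      · intro C hC
        rw [show wneg p (.base α) = dia p (.ineg (.base α)) from rfl, dia_iff]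
        simp only [Assert, Deny, SForm.sem]
        rw [base_exists_iff]
        push_neg
        simp [Bool.not_eq_true]
      · intro C hC
        rw [show wnegNeg p (.base α) = dia p (.base α) from rfl, dia_iff]
        simp only [Assert, Deny, SForm.sem]
        rw [base_exists_iff]
        push_neg
        simp [Bool.not_eq_false]
  | ineg φ ih =>
      exact ⟨fun C hC => ih.2 C hC, fun C hC => ih.1 C hC⟩
  | iconj φ ψ ihφ ihψ =>
      constructor
      · intro C hC
        show Assert C (wneg p φ) ∨ Assert C (wneg p ψ) ↔ ¬ (Assert C φ ∧ Assert C ψ)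
        rw [ihφ.1 C hC, ihψ.1 C hC]
        tauto
      · intro C hC
        show Assert C (wnegNeg p φ) ∧ Assert C (wnegNeg p ψ) ↔ ¬ (Deny C φ ∨ Deny C ψ)
        rw [ihφ.2 C hC, ihψ.2 C hC]
        tauto
  | idisj φ ψ ihφ ihψ =>
      constructor
      · intro C hC
        show Assert C (wneg p φ) ∧ Assert C (wneg p ψ) ↔ ¬ (Assert C φ ∨ Assert C ψ)
        rw [ihφ.1 C hC, ihψ.1 C hC]
        tauto
      · intro C hC
        show Assert C (wnegNeg p φ) ∨ Assert C (wnegNeg p ψ) ↔ ¬ (Deny C φ ∧ Deny C ψ)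
        rw [ihφ.2 C hC, ihψ.2 C hC]
        tauto
  | iimp φ ψ ihφ ihψ =>
      constructor
      · intro C hC
        rw [show wneg p (.iimp φ ψ) = dia p (.iconj φ (wneg p ψ)) from rfl, dia_iff]
        constructor
        · rintro ⟨D, hne, hsub, hφ, hw⟩ hasrt
          exact ((ihψ.1 D hne).mp hw) (hasrt D hne hsub hφ)
        · intro h
          rcases not_forall.mp h with ⟨D, hD⟩
          rcases _root_.not_imp.mp hD with ⟨hne, hD⟩
          rcases _root_.not_imp.mp hD with ⟨hsub, hD⟩
          rcases _root_.not_imp.mp hD with ⟨hφ, hψ⟩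
          exact ⟨D, hne, hsub, hφ, (ihψ.1 D hne).mpr hψ⟩
      · intro C hC
        show (∀ D : Context A, D.Nonempty → D ⊆ C → Assert D φ → Assert D (wnegNeg p ψ)) ↔
          ¬ ∃ D : Context A, D.Nonempty ∧ D ⊆ C ∧ Assert D φ ∧ Deny D ψ
        push_neg
        constructor
        · intro h D hne hsub hφ
          exact (ihψ.2 D hne).mp (h D hne hsub hφ)
        · intro h D hne hsub hφ
          exact (ihψ.2 D hne).mpr (h D hne hsub hφ)

theorem assert_wneg_iff_not_assert (p : A) (φ : SForm A)
    (C : Context A) (hC : C.Nonempty) :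
    Assert C (wneg p φ) ↔ ¬ Assert C φ :=
  (wneg_both p φ).1 C hC

end LAD
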